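/- Restrict the T²-action to the unit sphere S⁵ = {(z₁,z₂,z₃) ∈ ℂ³ : |z₁|² + |z₂|² + |z₃|² = 1}. Then the orbit space S⁵/T², endowed with the quotient topology, is homeomorphic to the 3-sphere S³. -/

import Mathlib

/-!
The invariants `|z₁|², |z₂|², z₁z₂z₃` separate `T²`-orbits, and on `S⁵` they take exactly the
values `(a, b, p)` with `a, b, c := 1 - a - b ≥ 0` and `|p|² = abc`. Recentred at the invariants
`(1/3, 1/3, 0)` of the orbit of `(1, 1, 1)/√3`, this set meets every ray from the origin of `ℝ⁴`
exactly once: at most once because shrinking a point of it towards the centre makes `|p|² < abc`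
strictly, at least once by the intermediate value theorem. Radial projection thus turns the
invariants into a continuous bijection `S⁵/T² → S³`, a homeomorphism since `S⁵` is compact.
-/

/-- The action of `(θ, φ) ∈ T²` on `ℂ³`,
`(e^{iθ}, e^{iφ})·(z₁,z₂,z₃) = (e^{iθ}z₁, e^{iφ}z₂, e^{−i(θ+φ)}z₃)`. -/
noncomputable def torusAct (θ φ : ℝ) (z : ℂ × ℂ × ℂ) : ℂ × ℂ × ℂ :=
  (Complex.exp (θ * Complex.I) * z.1,
   Complex.exp (φ * Complex.I) * z.2.1,
   Complex.exp (-(θ + φ) * Complex.I) * z.2.2)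

/-- The orbit equivalence relation of the `T²`-action on `ℂ³`. -/
noncomputable def torusSetoid : Setoid (ℂ × ℂ × ℂ) where
  r z w := ∃ θ φ : ℝ, w = torusAct θ φ z
  iseqv := by
    constructor
    · exact fun z => ⟨0, 0, by simp [torusAct]⟩
    · rintro z w ⟨θ, φ, rfl⟩
      refine ⟨-θ, -φ, ?_⟩
      refine Prod.ext ?_ (Prod.ext ?_ ?_) <;>
        · simp only [torusAct, ← mul_assoc, ← Complex.exp_add]
          push_cast
          ring_nf
          simp
    · rintro z w v ⟨θ, φ, rfl⟩ ⟨θ', φ', rfl⟩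
      refine ⟨θ + θ', φ + φ', ?_⟩
      refine Prod.ext ?_ (Prod.ext ?_ ?_) <;>
        · simp only [torusAct, ← mul_assoc, ← Complex.exp_add]
          push_cast
          ring_nf

/-- The unit 5-sphere `S⁵ ⊆ ℂ³`. -/
def sphere5 : Set (ℂ × ℂ × ℂ) :=
  {z | ‖z.1‖ ^ 2 + ‖z.2.1‖ ^ 2 + ‖z.2.2‖ ^ 2 = 1}

/-- The `T²`-orbit equivalence relation restricted to `S⁵`. -/
noncomputable def sphere5Setoid : Setoid sphere5 :=
  Setoid.comap Subtype.val torusSetoid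

open Complex

theorem Complex.exists_exp_mul_eq_of_norm_eq {z w : ℂ} (h : ‖z‖ = ‖w‖) :
    ∃ θ : ℝ, w = exp (θ * I) * z := by
  rcases eq_or_ne z 0 with rfl | hz
  · exact ⟨0, by simpa using h.symm⟩
  · have hwz : ‖w / z‖ = 1 := by rw [norm_div, ← h, div_self (norm_ne_zero_iff.mpr hz)]
    obtain ⟨θ, hθ⟩ := (norm_eq_one_iff (w / z)).mp hwz
    exact ⟨θ, by rw [hθ, div_mul_cancel₀ w hz]⟩

theorem exists_torusAct_eq_of_norm_eq_of_mul_eq {z w : ℂ × ℂ × ℂ} (h₁ : ‖z.1‖ = ‖w.1‖)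
    (h₂ : ‖z.2.1‖ = ‖w.2.1‖) (h₃ : ‖z.2.2‖ = ‖w.2.2‖)
    (hp : z.1 * z.2.1 * z.2.2 = w.1 * w.2.1 * w.2.2) :
    ∃ θ φ : ℝ, w = torusAct θ φ z := by
  obtain ⟨α, hα⟩ := exists_exp_mul_eq_of_norm_eq h₁
  obtain ⟨β, hβ⟩ := exists_exp_mul_eq_of_norm_eq h₂
  obtain ⟨γ, hγ⟩ := exists_exp_mul_eq_of_norm_eq h₃
  have hzero {u v : ℂ} (hu : u = 0) (huv : ‖u‖ = ‖v‖) (θ : ℝ) : v = exp (θ * I) * u := by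
    subst hu; simpa using huv.symm
  have hexp (θ φ ψ : ℝ) (h : ψ = -(θ + φ)) : exp (-(θ + φ : ℂ) * I) = exp (ψ * I) := by
    rw [h]; push_cast; ring_nf
  -- A vanishing coordinate frees its phase to fix `z₃`; otherwise the product forces `z₃`'s phase.
  by_cases hz₁ : z.1 = 0
  · refine ⟨-γ - β, β, Prod.ext (hzero hz₁ h₁ _) (Prod.ext hβ ?_)⟩
    simp only [torusAct, hexp (-γ - β) β γ (by ring), hγ]
  by_cases hz₂ : z.2.1 = 0
  · refine ⟨α, -γ - α, Prod.ext hα (Prod.ext (hzero hz₂ h₂ _) ?_)⟩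
    simp only [torusAct, hexp α (-γ - α) γ (by ring), hγ]
  refine ⟨α, β, Prod.ext hα (Prod.ext hβ ?_)⟩
  have hunit : exp (α * I) * exp (β * I) * exp (-(α + β : ℂ) * I) = 1 := by
    rw [← Complex.exp_add, ← Complex.exp_add, ← Complex.exp_zero]; ring_nf
  have : z.1 * z.2.1 * (exp (-(α + β : ℂ) * I) * z.2.2) = z.1 * z.2.1 * w.2.2 := by
    rw [hα, hβ] at hp
    linear_combination exp (-(α + β : ℂ) * I) * hp + (z.1 * z.2.1 * w.2.2) * hunit
  exact (mul_left_cancel₀ (mul_ne_zero hz₁ hz₂) this).symm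

theorem exists_norm_sq_eq_of_norm_sq_eq_mul {a b c : ℝ} (ha : 0 ≤ a) (hb : 0 ≤ b) (hc : 0 ≤ c)
    {p : ℂ} (hp : ‖p‖ ^ 2 = a * b * c) :
    ∃ z : ℂ × ℂ × ℂ, ‖z.1‖ ^ 2 = a ∧ ‖z.2.1‖ ^ 2 = b ∧ ‖z.2.2‖ ^ 2 = c ∧
      z.1 * z.2.1 * z.2.2 = p := by
  have hsq {r : ℝ} (hr : 0 ≤ r) : ‖(√r : ℂ)‖ ^ 2 = r := by
    rw [Complex.norm_real, Real.norm_eq_abs, sq_abs, Real.sq_sqrt hr]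
  by_cases hab : a * b = 0
  · refine ⟨(√a, √b, √c), hsq ha, hsq hb, hsq hc, ?_⟩
    have hp0 : p = 0 := by simpa [hab] using hp
    rw [hp0, ← Complex.ofReal_mul, ← Real.sqrt_mul ha, hab, Real.sqrt_zero]
    simp
  · have hsqrt : (√a : ℂ) * √b ≠ 0 := by
      rw [← Complex.ofReal_mul, ← Real.sqrt_mul ha, Complex.ofReal_ne_zero]
      exact Real.sqrt_ne_zero'.mpr (lt_of_le_of_ne (mul_nonneg ha hb) (Ne.symm hab))
    refine ⟨(√a, √b, p / (√a * √b)), hsq ha, hsq hb, ?_, mul_div_cancel₀ p hsqrt⟩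
    rw [norm_div, div_pow, hp, norm_mul, mul_pow, hsq ha, hsq hb]
    exact mul_div_cancel_left₀ c hab

theorem norm_torusAct (θ φ : ℝ) (z : ℂ × ℂ × ℂ) :
    ‖(torusAct θ φ z).1‖ = ‖z.1‖ ∧ ‖(torusAct θ φ z).2.1‖ = ‖z.2.1‖ ∧
      ‖(torusAct θ φ z).2.2‖ = ‖z.2.2‖ := by
  simp [torusAct, norm_exp]

theorem torusAct_mul (θ φ : ℝ) (z : ℂ × ℂ × ℂ) :
    (torusAct θ φ z).1 * (torusAct θ φ z).2.1 * (torusAct θ φ z).2.2 = z.1 * z.2.1 * z.2.2 := by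
  have hunit : exp (θ * I) * exp (φ * I) * exp (-(θ + φ : ℂ) * I) = 1 := by
    rw [← Complex.exp_add, ← Complex.exp_add, ← Complex.exp_zero]; ring_nf
  simp only [torusAct]
  linear_combination (z.1 * z.2.1 * z.2.2) * hunit

noncomputable def orbitInvariant (z : ℂ × ℂ × ℂ) : EuclideanSpace ℝ (Fin 4) :=
  !₂[‖z.1‖ ^ 2 - 1 / 3, ‖z.2.1‖ ^ 2 - 1 / 3, (z.1 * z.2.1 * z.2.2).re, (z.1 * z.2.1 * z.2.2).im]

theorem continuous_orbitInvariant : Continuous orbitInvariant := by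
  unfold orbitInvariant
  fun_prop

theorem orbitInvariant_torusAct (θ φ : ℝ) (z : ℂ × ℂ × ℂ) :
    orbitInvariant (torusAct θ φ z) = orbitInvariant z := by
  obtain ⟨h₁, h₂, -⟩ := norm_torusAct θ φ z
  simp only [orbitInvariant, h₁, h₂, torusAct_mul]

theorem orbitInvariant_eq_iff {z w : ℂ × ℂ × ℂ} (hz : z ∈ sphere5) (hw : w ∈ sphere5) :
    orbitInvariant z = orbitInvariant w ↔ torusSetoid z w := by
  refine ⟨fun h => ?_, fun ⟨θ, φ, hzw⟩ => hzw ▸ (orbitInvariant_torusAct θ φ z).symm⟩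
  have h₀ := congrArg (· 0) h
  have h₁ := congrArg (· 1) h
  have h₂ := congrArg (· 2) h
  have h₃ := congrArg (· 3) h
  simp only [orbitInvariant, PiLp.toLp_apply, Matrix.cons_val, sub_left_inj] at h₀ h₁ h₂ h₃
  have hz' : ‖z.1‖ ^ 2 + ‖z.2.1‖ ^ 2 + ‖z.2.2‖ ^ 2 = 1 := hz
  have hw' : ‖w.1‖ ^ 2 + ‖w.2.1‖ ^ 2 + ‖w.2.2‖ ^ 2 = 1 := hw
  have hnorm {u v : ℂ} (huv : ‖u‖ ^ 2 = ‖v‖ ^ 2) : ‖u‖ = ‖v‖ :=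
    (sq_eq_sq₀ (norm_nonneg u) (norm_nonneg v)).mp huv
  exact exists_torusAct_eq_of_norm_eq_of_mul_eq (hnorm h₀) (hnorm h₁) (hnorm (by linarith))
    (Complex.ext h₂ h₃)

def invariantLocus : Set (EuclideanSpace ℝ (Fin 4)) :=
  {x | 0 ≤ x 0 + 1 / 3 ∧ 0 ≤ x 1 + 1 / 3 ∧ 0 ≤ 1 / 3 - x 0 - x 1 ∧
    x 2 ^ 2 + x 3 ^ 2 = (x 0 + 1 / 3) * (x 1 + 1 / 3) * (1 / 3 - x 0 - x 1)}

theorem orbitInvariant_mem_invariantLocus {z : ℂ × ℂ × ℂ} (hz : z ∈ sphere5) :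
    orbitInvariant z ∈ invariantLocus := by
  have hz' : ‖z.1‖ ^ 2 + ‖z.2.1‖ ^ 2 + ‖z.2.2‖ ^ 2 = 1 := hz
  have h₃ : 1 / 3 - (‖z.1‖ ^ 2 - 1 / 3) - (‖z.2.1‖ ^ 2 - 1 / 3) = ‖z.2.2‖ ^ 2 := by linarith
  have hre_im (p : ℂ) : p.re ^ 2 + p.im ^ 2 = ‖p‖ ^ 2 := by
    rw [Complex.sq_norm, Complex.normSq_apply]; ring
  simp only [invariantLocus, orbitInvariant, Matrix.cons_val, Set.mem_ofPred_eq, sub_add_cancel,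
    h₃, hre_im, norm_mul]
  exact ⟨by positivity, by positivity, by positivity, by ring⟩

theorem exists_orbitInvariant_eq {x : EuclideanSpace ℝ (Fin 4)} (hx : x ∈ invariantLocus) :
    ∃ z ∈ sphere5, orbitInvariant z = x := by
  obtain ⟨ha, hb, hc, hp⟩ := hx
  obtain ⟨z, h₁, h₂, h₃, hmul⟩ := exists_norm_sq_eq_of_norm_sq_eq_mul ha hb hc (p := ⟨x 2, x 3⟩)
    (by rw [Complex.sq_norm, Complex.normSq_mk, ← hp]; ring)
  refine ⟨z, show _ = _ by rw [h₁, h₂, h₃]; ring, ?_⟩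
  ext i
  fin_cases i <;> simp [orbitInvariant, h₁, h₂, hmul]

theorem smul_notMem_invariantLocus {x : EuclideanSpace ℝ (Fin 4)} (hx : x ∈ invariantLocus)
    {s : ℝ} (hs₀ : 0 < s) (hs₁ : s < 1) : s • x ∉ invariantLocus := by
  obtain ⟨ha, hb, hc, hx⟩ := hx
  rintro ⟨-, -, -, hsx⟩
  simp only [PiLp.smul_apply, smul_eq_mul] at hsx
  set a := x 0 + 1 / 3
  set b := x 1 + 1 / 3
  set c := 1 / 3 - x 0 - x 1
  set u := (1 - s) / 3
  have hu : 0 < u := by simp only [u]; linarith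
  have hexpand : (s * x 0 + 1 / 3) * (s * x 1 + 1 / 3) * (1 / 3 - s * x 0 - s * x 1)
      - s ^ 2 * (x 2 ^ 2 + x 3 ^ 2) =
      u ^ 3 + u ^ 2 * s + u * s ^ 2 * (a * b * (a + b) + b * c * (b + c) + c * a * (c + a)) := by
    rw [hx]; ring
  have : 0 ≤ u * s ^ 2 * (a * b * (a + b) + b * c * (b + c) + c * a * (c + a)) := by positivity
  nlinarith [pow_pos hu 3, mul_pos (pow_pos hu 2) hs₀]

/-- Vanishes exactly on `invariantLocus`: when one of the first three entries is zero, the last one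
is `-(x 2 ^ 2 + x 3 ^ 2) ≤ 0`. -/
noncomputable def locusDefect (x : EuclideanSpace ℝ (Fin 4)) : ℝ :=
  min (min (x 0 + 1 / 3) (x 1 + 1 / 3))
    (min (1 / 3 - x 0 - x 1)
      ((x 0 + 1 / 3) * (x 1 + 1 / 3) * (1 / 3 - x 0 - x 1) - (x 2 ^ 2 + x 3 ^ 2)))

theorem continuous_locusDefect : Continuous locusDefect := by
  unfold locusDefect
  fun_prop

theorem mem_invariantLocus_of_locusDefect_eq_zero {x : EuclideanSpace ℝ (Fin 4)}
    (h : locusDefect x = 0) : x ∈ invariantLocus := by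
  have hnonneg := h.ge
  simp only [locusDefect, le_min_iff] at hnonneg
  obtain ⟨⟨ha, hb⟩, hc, hp⟩ := hnonneg
  refine ⟨ha, hb, hc, (sub_nonneg.mp hp).eq_of_not_lt fun hlt => h.not_gt ?_⟩
  have hprod : 0 < (x 0 + 1 / 3) * (x 1 + 1 / 3) * (1 / 3 - x 0 - x 1) :=
    (by positivity : (0 : ℝ) ≤ x 2 ^ 2 + x 3 ^ 2).trans_lt hlt
  have hab := pos_of_mul_pos_left hprod hc
  exact lt_min (lt_min (pos_of_mul_pos_left hab hb) (pos_of_mul_pos_right hab ha))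
    (lt_min (pos_of_mul_pos_right hprod hab.le) (sub_pos.mpr hlt))

theorem locusDefect_neg_of_three_lt_norm_sq {x : EuclideanSpace ℝ (Fin 4)} (hx : 3 < ‖x‖ ^ 2) :
    locusDefect x < 0 := by
  rw [EuclideanSpace.norm_sq_eq, Fin.sum_univ_four] at hx
  simp only [Real.norm_eq_abs, sq_abs] at hx
  by_contra! hnonneg
  simp only [locusDefect, le_min_iff] at hnonneg
  obtain ⟨⟨ha, hb⟩, hc, hp⟩ := hnonneg
  nlinarith [mul_nonneg ha hb]

theorem exists_pos_smul_mem_invariantLocus {v : EuclideanSpace ℝ (Fin 4)} (hv : ‖v‖ = 1) :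
    ∃ t : ℝ, 0 < t ∧ t • v ∈ invariantLocus := by
  have hcont : ContinuousOn (fun t : ℝ => locusDefect (t • v)) (Set.Icc 0 2) :=
    (continuous_locusDefect.comp (continuous_id.smul continuous_const)).continuousOn
  have h₀ : locusDefect 0 = 1 / 27 := by norm_num [locusDefect]
  have h₂ : locusDefect ((2 : ℝ) • v) < 0 :=
    locusDefect_neg_of_three_lt_norm_sq (by rw [norm_smul, hv]; norm_num)
  obtain ⟨t, ⟨ht, -⟩, hzero⟩ :=
    intermediate_value_Icc' zero_le_two hcont ⟨h₂.le, by norm_num [h₀]⟩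
  refine ⟨t, ht.lt_of_ne ?_, mem_invariantLocus_of_locusDefect_eq_zero hzero⟩
  rintro rfl
  norm_num [h₀] at hzero

theorem NormedSpace.injOn_normalize {V : Type*} [NormedAddCommGroup V] [NormedSpace ℝ V]
    {K : Set V} (hK : ∀ x ∈ K, ∀ s : ℝ, 0 < s → s < 1 → s • x ∉ K) : Set.InjOn normalize K := by
  intro x hx y hy h
  have hK₀ {x : V} (hx : x ∈ K) : 0 < ‖x‖ := by
    refine norm_pos_iff.mpr fun hx₀ => ?_
    exact hK 0 (hx₀ ▸ hx) (1 / 2) (by norm_num) (by norm_num) (by rwa [smul_zero, ← hx₀])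
  wlog hyx : ‖y‖ ≤ ‖x‖ generalizing x y
  · exact (this hy hx h.symm (le_of_not_ge hyx)).symm
  have hxy : y = (‖y‖ / ‖x‖) • x := by
    nth_rw 1 [← norm_smul_normalize y]
    rw [← h, normalize, smul_smul, div_eq_mul_inv]
  rcases hyx.lt_or_eq with hlt | heq
  · refine absurd (by rwa [hxy] at hy) (hK x hx _ (div_pos (hK₀ hy) (hK₀ hx)) ?_)
    exact (div_lt_one (hK₀ hx)).mpr hlt
  · rw [hxy, heq, div_self (hK₀ hx).ne', one_smul]

theorem isCompact_sphere5 : IsCompact sphere5 := by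
  refine Metric.isCompact_of_isClosed_isBounded (isClosed_eq (by fun_prop) continuous_const) ?_
  refine (Metric.isBounded_closedBall (x := 0) (r := 1)).subset fun z (hz : _ = _) => ?_
  have h₁ : ‖z.1‖ ^ 2 ≤ 1 := by nlinarith [sq_nonneg ‖z.2.1‖, sq_nonneg ‖z.2.2‖]
  have h₂ : ‖z.2.1‖ ^ 2 ≤ 1 := by nlinarith [sq_nonneg ‖z.1‖, sq_nonneg ‖z.2.2‖]
  have h₃ : ‖z.2.2‖ ^ 2 ≤ 1 := by nlinarith [sq_nonneg ‖z.1‖, sq_nonneg ‖z.2.1‖]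
  simp only [mem_closedBall_zero_iff, norm_prod_le_iff]
  exact ⟨(sq_le_one_iff₀ (norm_nonneg _)).mp h₁, (sq_le_one_iff₀ (norm_nonneg _)).mp h₂,
    (sq_le_one_iff₀ (norm_nonneg _)).mp h₃⟩

theorem orbitInvariant_ne_zero {z : ℂ × ℂ × ℂ} (hz : z ∈ sphere5) : orbitInvariant z ≠ 0 := by
  intro h
  have := h ▸ orbitInvariant_mem_invariantLocus hz
  norm_num [invariantLocus] at this

noncomputable def orbitMap (z : sphere5) : Metric.sphere (0 : EuclideanSpace ℝ (Fin 4)) 1 :=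
  ⟨NormedSpace.normalize (orbitInvariant z), by
    rw [mem_sphere_zero_iff_norm, NormedSpace.norm_normalize_eq_one_iff]
    exact orbitInvariant_ne_zero z.2⟩

theorem continuous_orbitMap : Continuous orbitMap := by
  have h : Continuous fun z : sphere5 => orbitInvariant z :=
    continuous_orbitInvariant.comp continuous_subtype_val
  have hne (z : sphere5) : ‖orbitInvariant z‖ ≠ 0 :=
    norm_ne_zero_iff.mpr (orbitInvariant_ne_zero z.2)
  exact ((h.norm.inv₀ hne).smul h).subtype_mk _

theorem orbitMap_eq_iff (z w : sphere5) : orbitMap z = orbitMap w ↔ sphere5Setoid z w := by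
  rw [Subtype.ext_iff, sphere5Setoid, Setoid.comap_rel, ← orbitInvariant_eq_iff z.2 w.2]
  exact ⟨NormedSpace.injOn_normalize (fun x hx s => smul_notMem_invariantLocus hx)
    (orbitInvariant_mem_invariantLocus z.2) (orbitInvariant_mem_invariantLocus w.2),
    congrArg NormedSpace.normalize⟩

theorem orbitMap_surjective : Function.Surjective orbitMap := by
  rintro ⟨v, hv⟩
  rw [mem_sphere_zero_iff_norm] at hv
  obtain ⟨t, ht, htv⟩ := exists_pos_smul_mem_invariantLocus hv
  obtain ⟨z, hz, hzv⟩ := exists_orbitInvariant_eq htv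
  refine ⟨⟨z, hz⟩, Subtype.ext ?_⟩
  simp only [orbitMap, hzv, NormedSpace.normalize_smul_of_pos ht,
    NormedSpace.normalize_eq_self_of_norm_eq_one hv]

theorem sphere5_quotient_homeomorph_S3 :
    Nonempty (Quotient sphere5Setoid ≃ₜ
      Metric.sphere (0 : EuclideanSpace ℝ (Fin 4)) 1) := by
  have : CompactSpace sphere5 := isCompact_iff_compactSpace.mp isCompact_sphere5
  rw [show sphere5Setoid = Setoid.ker orbitMap from
    Setoid.ext fun z w => (orbitMap_eq_iff z w).symm]
  exact ⟨Topology.IsQuotientMap.homeomorph (f := ⟨orbitMap, continuous_orbitMap⟩)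
    (.of_surjective_continuous orbitMap_surjective continuous_orbitMap)⟩
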